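/- Let A be a nonnegative n×n matrix such that Aᴺ has all positive entries. If w₁ and w₂ are both nonnegative nonzero eigenvectors of A (for possibly different eigenvalues), then both eigenvalues equal the spectral radius λ_A and w₂ is a positive scalar multiple of w₁. -/

import Mathlib

open Matrix

/-- Spectral radius of a real square matrix: the largest modulus of a complex
eigenvalue. -/
noncomputable def specRad {n : ℕ} (M : Matrix (Fin n) (Fin n) ℝ) : ℝ :=
  sSup {r : ℝ | ∃ μ ∈ spectrum ℂ (M.map (algebraMap ℝ ℂ)), r = ‖μ‖}

/-!
A nonnegative nonzero eigenvector `w` of a primitive matrix is positive, since `Aᴺ w = μᴺ w`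
and `Aᴺ` maps nonzero nonnegative vectors to positive ones. A positive eigenvector `w` for `μ`
controls every complex eigenvalue `z` with eigenvector `v`: `|z| |v| ≤ A |v|` entrywise, and
at an index where `|v|` touches the smallest multiple `t w` dominating it this gives
`|z| t w ≤ t μ w`, i.e. `|z| ≤ μ`; hence `μ` is the spectral radius. Finally, for two positive
eigenvectors of the same eigenvalue, subtracting the largest multiple of `w₁` that fits under
`w₂` leaves a nonnegative eigenvector with a zero entry, which must vanish.
-/

namespace Matrix

variable {ι : Type*} [Fintype ι]

theorem pow_mulVec_of_mulVec_eq_smul {R : Type*} [CommSemiring R] [DecidableEq ι]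
    {A : Matrix ι ι R} {w : ι → R} {μ : R} (h : A *ᵥ w = μ • w) (k : ℕ) :
    (A ^ k) *ᵥ w = μ ^ k • w := by
  induction k with
  | zero => simp
  | succ k ih => rw [pow_succ, ← mulVec_mulVec, h, mulVec_smul, ih, smul_smul, pow_succ']

theorem mem_spectrum_iff_exists_mulVec_eq_smul {K : Type*} [Field K] [DecidableEq ι]
    {M : Matrix ι ι K} {z : K} : z ∈ spectrum K M ↔ ∃ v ≠ 0, M *ᵥ v = z • v := by
  rw [← spectrum_toLin', ← Module.End.hasEigenvalue_iff_mem_spectrum]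
  constructor
  · intro hz
    obtain ⟨v, hv⟩ := hz.exists_hasEigenvector
    exact ⟨v, hv.2, Module.End.mem_eigenspace_iff.mp hv.1⟩
  · rintro ⟨v, hv0, hv⟩
    exact Module.End.hasEigenvalue_of_hasEigenvector ⟨Module.End.mem_eigenspace_iff.mpr hv, hv0⟩

theorem mulVec_pos_of_pos_of_nonneg {M : Matrix ι ι ℝ} (hM : ∀ i j, 0 < M i j) {w : ι → ℝ}
    (hw : 0 ≤ w) (hw0 : w ≠ 0) (i : ι) : 0 < (M *ᵥ w) i := by
  obtain ⟨j, hj⟩ := Function.ne_iff.mp hw0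
  exact Finset.sum_pos' (fun k _ => mul_nonneg (hM i k).le (hw k))
    ⟨j, Finset.mem_univ j, mul_pos (hM i j) ((hw j).lt_of_ne' hj)⟩

theorem pos_of_nonneg_eigenvector [DecidableEq ι] {A : Matrix ι ι ℝ} {N : ℕ}
    (hAN : ∀ i j, 0 < (A ^ N) i j) {w : ι → ℝ} (hw : 0 ≤ w) (hw0 : w ≠ 0) {μ : ℝ}
    (h : A *ᵥ w = μ • w) (i : ι) : 0 < w i := by
  have hpos := mulVec_pos_of_pos_of_nonneg hAN hw hw0 i
  rw [pow_mulVec_of_mulVec_eq_smul h, Pi.smul_apply, smul_eq_mul] at hpos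
  exact (hw i).lt_of_ne' (right_ne_zero_of_mul hpos.ne')

theorem eigenvalue_nonneg_of_pos_eigenvector [Nonempty ι] {A : Matrix ι ι ℝ}
    (hA : ∀ i j, 0 ≤ A i j) {w : ι → ℝ} (hw : ∀ i, 0 < w i) {μ : ℝ} (h : A *ᵥ w = μ • w) :
    0 ≤ μ := by
  obtain ⟨i⟩ := ‹Nonempty ι›
  have hAw : 0 ≤ (A *ᵥ w) i := Finset.sum_nonneg fun j _ => mul_nonneg (hA i j) (hw j).le
  rw [h, Pi.smul_apply, smul_eq_mul] at hAw
  exact nonneg_of_mul_nonneg_left hAw (hw i)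

theorem le_of_smul_le_mulVec {A : Matrix ι ι ℝ} (hA : ∀ i j, 0 ≤ A i j) {w : ι → ℝ}
    (hw : ∀ i, 0 < w i) {μ : ℝ} (h : A *ᵥ w = μ • w) {x : ι → ℝ} (hx : 0 ≤ x) (hx0 : x ≠ 0)
    {r : ℝ} (hr : r • x ≤ A *ᵥ x) : r ≤ μ := by
  obtain ⟨j, hj⟩ := Function.ne_iff.mp hx0
  have : Nonempty ι := ⟨j⟩
  obtain ⟨k, hk⟩ := Finite.exists_max fun i => x i / w i
  set t := x k / w k
  have hxt : ∀ i, x i ≤ t * w i := fun i => (div_le_iff₀ (hw i)).mp (hk i)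
  have hxk : x k = t * w k := (div_mul_cancel₀ _ (hw k).ne').symm
  have ht : 0 < t := (div_pos ((hx j).lt_of_ne' hj) (hw j)).trans_le (hk j)
  have hAx : r * x k ≤ μ * x k :=
    calc r * x k ≤ (A *ᵥ x) k := hr k
      _ ≤ ∑ i, A k i * (t * w i) :=
          Finset.sum_le_sum fun i _ => mul_le_mul_of_nonneg_left (hxt i) (hA k i)
      _ = t * (A *ᵥ w) k := by
          simp only [mulVec, dotProduct, Finset.mul_sum]
          exact Finset.sum_congr rfl fun i _ => by ring
      _ = μ * x k := by rw [h, Pi.smul_apply, smul_eq_mul, hxk]; ring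
  exact le_of_mul_le_mul_right hAx (hxk ▸ mul_pos ht (hw k))

theorem norm_mulVec_map_le {A : Matrix ι ι ℝ} (hA : ∀ i j, 0 ≤ A i j) (v : ι → ℂ) (i : ι) :
    ‖(A.map (algebraMap ℝ ℂ) *ᵥ v) i‖ ≤ (A *ᵥ fun j => ‖v j‖) i :=
  calc ‖∑ j, A.map (algebraMap ℝ ℂ) i j * v j‖
      ≤ ∑ j, ‖A.map (algebraMap ℝ ℂ) i j * v j‖ := norm_sum_le _ _
    _ = (A *ᵥ fun j => ‖v j‖) i := by
      refine Finset.sum_congr rfl fun j _ => ?_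
      rw [norm_mul, map_apply, Complex.coe_algebraMap, Complex.norm_real,
        Real.norm_of_nonneg (hA i j)]

theorem norm_le_of_mem_spectrum_of_pos_eigenvector [DecidableEq ι] {A : Matrix ι ι ℝ}
    (hA : ∀ i j, 0 ≤ A i j) {w : ι → ℝ} (hw : ∀ i, 0 < w i) {μ : ℝ} (h : A *ᵥ w = μ • w)
    {z : ℂ} (hz : z ∈ spectrum ℂ (A.map (algebraMap ℝ ℂ))) : ‖z‖ ≤ μ := by
  obtain ⟨v, hv0, hv⟩ := mem_spectrum_iff_exists_mulVec_eq_smul.mp hz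
  refine le_of_smul_le_mulVec hA hw h (x := fun j => ‖v j‖) (fun j => norm_nonneg _)
    (fun hx => hv0 (funext fun j => norm_eq_zero.mp (congrFun hx j))) fun i => ?_
  have hvi := norm_mulVec_map_le hA v i
  rwa [hv, Pi.smul_apply, smul_eq_mul, norm_mul] at hvi

theorem exists_pos_smul_eq_of_pos_eigenvectors [DecidableEq ι] [Nonempty ι]
    {A : Matrix ι ι ℝ} {N : ℕ} (hAN : ∀ i j, 0 < (A ^ N) i j) {w₁ w₂ : ι → ℝ}
    (hw₁ : ∀ i, 0 < w₁ i) (hw₂ : ∀ i, 0 < w₂ i) {μ : ℝ} (h₁ : A *ᵥ w₁ = μ • w₁)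
    (h₂ : A *ᵥ w₂ = μ • w₂) : ∃ c : ℝ, 0 < c ∧ w₂ = c • w₁ := by
  obtain ⟨k, hk⟩ := Finite.exists_min fun i => w₂ i / w₁ i
  set c := w₂ k / w₁ k
  set u := w₂ - c • w₁
  have hu : 0 ≤ u := fun i => by
    simpa [u, sub_nonneg] using (le_div_iff₀ (hw₁ i)).mp (hk i)
  have huk : u k = 0 := by simp [u, c, div_mul_cancel₀ _ (hw₁ k).ne']
  have hAu : A *ᵥ u = μ • u := by
    rw [mulVec_sub, mulVec_smul, h₁, h₂, smul_sub, smul_comm c μ]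
  refine ⟨c, div_pos (hw₂ k) (hw₁ k), ?_⟩
  by_contra hne
  exact (pos_of_nonneg_eigenvector hAN hu (sub_ne_zero.mpr hne) hAu k).ne' huk

end Matrix

theorem specRad_eq_of_pos_eigenvector {n : ℕ} [Nonempty (Fin n)] {A : Matrix (Fin n) (Fin n) ℝ}
    (hA : ∀ i j, 0 ≤ A i j) {w : Fin n → ℝ} (hw : ∀ i, 0 < w i) {μ : ℝ}
    (h : A *ᵥ w = μ • w) : specRad A = μ := by
  have hμ : 0 ≤ μ := eigenvalue_nonneg_of_pos_eigenvector hA hw h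
  refine IsGreatest.csSup_eq ⟨⟨μ, ?_, by rw [Complex.norm_real, Real.norm_of_nonneg hμ]⟩, ?_⟩
  · refine mem_spectrum_iff_exists_mulVec_eq_smul.mpr ⟨fun i => w i, ?_, ?_⟩
    · obtain ⟨i⟩ := ‹Nonempty (Fin n)›
      exact Function.ne_iff.mpr ⟨i, Complex.ofReal_ne_zero.mpr (hw i).ne'⟩
    · ext i
      simpa [mulVec, dotProduct] using congrArg Complex.ofReal (congrFun h i)
  · rintro r ⟨z, hz, rfl⟩
    exact norm_le_of_mem_spectrum_of_pos_eigenvector hA hw h hz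

/-- Perron–Frobenius ii)–iv): for a primitive nonnegative matrix, any two
nonnegative nonzero eigenvectors correspond to the spectral radius and are
positive multiples of each other. -/
theorem nonnegative_eigenvectors_are_perron
    (n N : ℕ) (A : Matrix (Fin n) (Fin n) ℝ)
    (hA : ∀ i j, 0 ≤ A i j) (hAN : ∀ i j, 0 < (A ^ N) i j)
    (w₁ w₂ : Fin n → ℝ) (hw₁0 : ∀ i, 0 ≤ w₁ i) (hw₂0 : ∀ i, 0 ≤ w₂ i)
    (hw₁ne : w₁ ≠ 0) (hw₂ne : w₂ ≠ 0)
    (μ₁ μ₂ : ℝ) (h₁ : A *ᵥ w₁ = μ₁ • w₁) (h₂ : A *ᵥ w₂ = μ₂ • w₂) :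
    μ₁ = specRad A ∧ μ₂ = specRad A ∧ ∃ c : ℝ, 0 < c ∧ w₂ = c • w₁ := by
  obtain ⟨i, -⟩ := Function.ne_iff.mp hw₁ne
  have : Nonempty (Fin n) := ⟨i⟩
  have hp₁ := pos_of_nonneg_eigenvector hAN hw₁0 hw₁ne h₁
  have hp₂ := pos_of_nonneg_eigenvector hAN hw₂0 hw₂ne h₂
  have hρ₁ := specRad_eq_of_pos_eigenvector hA hp₁ h₁
  have hρ₂ := specRad_eq_of_pos_eigenvector hA hp₂ h₂
  refine ⟨hρ₁.symm, hρ₂.symm, ?_⟩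
  rw [← hρ₂, hρ₁] at h₂
  exact exists_pos_smul_eq_of_pos_eigenvectors hAN hp₁ hp₂ h₁ h₂
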